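/- In the 3SAT reduction of the IMT hardness proof: given a satisfying assignment f of the 3SAT instance, the edge set Z consisting of all border edges x_j C_h with f(x_j) = 1 and all border edges x̄_j C_h with f(x_j) = 0 is a selection (each clause vertex C_h is covered), and for every j at most one of the stars at x_j and x̄_j meets Z, so that the private neighbor x_j x̄_j edges of T retain private neighbors; hence some subset Z' ⊆ Z makes T ∪ Z' a minimal transversal of E_i. Conversely, from any selection Z with T ∪ Z ∈ tr(E_i), the assignment f(x_j) = 1 iff Z meets the star of x_j is well-defined and satisfies all clauses. -/

import Mathlib

/-- Two edges (as unordered pairs) are adjacent if they share an endpoint. -/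
def eAdj {V : Type*} (e f : Sym2 V) : Prop := ∃ v, v ∈ e ∧ v ∈ f

/-- `T` is a transversal of the edge set `E'`. -/
def TrOf {V : Type*} (E' T : Set (Sym2 V)) : Prop := ∀ e ∈ E', ∃ f ∈ T, eAdj e f

/-- Private neighbors of `e` w.r.t. `T` within `E'`. -/
def PrivE {V : Type*} (E' : Set (Sym2 V)) (e : Sym2 V) (T : Set (Sym2 V)) : Set (Sym2 V) :=
  {f ∈ E' | eAdj e f ∧ ∀ g ∈ T \ {e}, ¬ eAdj f g}

/-- `T` is a minimal transversal of `E'`. -/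
def MinTrOf {V : Type*} (E' T : Set (Sym2 V)) : Prop :=
  TrOf E' T ∧ ∀ e ∈ T, (PrivE E' e T).Nonempty

/-- The vertices of the IMT-hardness reduction: literal vertices `pos j`, `neg j`,
clause vertices `cls h`, pendant vertices `zv j`, `yv j`, and `w`, `x`, `y`. -/
inductive RVert (n m : ℕ) : Type where
  | pos (j : Fin n) | neg (j : Fin n) | cls (h : Fin m)
  | zv (j : Fin n) | yv (j : Fin n) | w | x | y
deriving DecidableEq

open RVert

/-- The edge set `E_{i-1}` of the reduction. -/
def Eprev {n m : ℕ} (C : Fin m → Finset (Fin n × Bool)) : Set (Sym2 (RVert n m)) :=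
  {e | (∃ j h, (j, true) ∈ C h ∧ e = s(pos j, cls h)) ∨
       (∃ j h, (j, false) ∈ C h ∧ e = s(neg j, cls h)) ∨
       (∃ j, e = s(pos j, zv j)) ∨ (∃ j, e = s(neg j, yv j)) ∨
       (∃ j, e = s(pos j, neg j))}

/-- The edge set `E_i` of the reduction: `E_{i-1}` plus the edges `y C_h`, `xy`, `xw`. -/
def Ecur {n m : ℕ} (C : Fin m → Finset (Fin n × Bool)) : Set (Sym2 (RVert n m)) :=
  Eprev C ∪ {e | (∃ h, e = s(y, cls h)) ∨ e = s(x, y) ∨ e = s(x, w)}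

/-- The transversal `T = {x_j x̄_j : j ≤ n} ∪ {xw}` of the reduction. -/
def Tred (n m : ℕ) : Set (Sym2 (RVert n m)) :=
  {e | (∃ j, e = s(pos j, neg j)) ∨ e = s(x, w)}

/-- The border edges of the reduction: the literal–clause edges. -/
def BdRed {n m : ℕ} (C : Fin m → Finset (Fin n × Bool)) : Set (Sym2 (RVert n m)) :=
  {e | (∃ j h, (j, true) ∈ C h ∧ e = s(pos j, cls h)) ∨
       (∃ j h, (j, false) ∈ C h ∧ e = s(neg j, cls h))}

/-- Selections of the reduction: sets of border edges with exactly one edge incident to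
each (free) clause vertex `C_h`. -/
def SelRed {n m : ℕ} (C : Fin m → Finset (Fin n × Bool)) (Z : Set (Sym2 (RVert n m))) :
    Prop :=
  Z ⊆ BdRed C ∧ ∀ h : Fin m, ∃! e, e ∈ Z ∧ cls h ∈ e

/-!
Under a satisfying assignment the border edges at true literals cover every clause vertex and
never touch both `x_j` and `x̄_j`; so the pendant edge at the false literal (`x_j z_j` or
`x̄_j y_j`) remains a private neighbour of `x_j x̄_j`, and `x y` one of `x w`. A transversal
`T ∪ Z` in which every edge of `T` has a private neighbour thins to a minimal one `T ∪ Z'` by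
discarding, one at a time, edges of the finite set `Z` without private neighbour: removing
edges only creates private neighbours.
Conversely, if a selection met both stars at `x_j` and `x̄_j`, both endpoints of `x_j x̄_j`
would be covered by other edges, leaving it without private neighbour; so the literals chosen
at the clause vertices define a consistent satisfying assignment.
-/

section Transversal

variable {V : Type*} {E S : Set (Sym2 V)} {e : Sym2 V}

lemma eAdj_comm {e f : Sym2 V} : eAdj e f ↔ eAdj f e := by
  simp only [eAdj, and_comm]

lemma trOf_of_forall_exists_mem (h : ∀ p ∈ E, ∃ v ∈ p, ∃ g ∈ S, v ∈ g) : TrOf E S :=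
  fun p hp =>
    let ⟨v, hvp, g, hgS, hvg⟩ := h p hp
    ⟨g, hgS, v, hvp, hvg⟩

lemma privE_anti {S' : Set (Sym2 V)} (h : S' ⊆ S) : PrivE E e S ⊆ PrivE E e S' :=
  fun _ ⟨hpE, hadj, hpriv⟩ => ⟨hpE, hadj, fun g hg => hpriv g ⟨h hg.1, hg.2⟩⟩

lemma mem_privE_of_forall_mem_eq {p : Sym2 V} (hpE : p ∈ E) (hadj : eAdj e p)
    (hp : ∀ v ∈ p, ∀ g ∈ S, v ∈ g → g = e) : p ∈ PrivE E e S :=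
  ⟨hpE, hadj, fun g ⟨hgS, hge⟩ ⟨v, hvp, hvg⟩ => hge (hp v hvp g hgS hvg)⟩

lemma privE_eq_empty_of_forall_mem (he : ∀ v ∈ e, ∃ g ∈ S, g ≠ e ∧ v ∈ g) :
    PrivE E e S = ∅ := by
  refine Set.eq_empty_of_forall_notMem fun p ⟨_, ⟨v, hve, hvp⟩, hpriv⟩ => ?_
  obtain ⟨g, hgS, hge, hvg⟩ := he v hve
  exact hpriv g ⟨hgS, hge⟩ ⟨v, hvp, hvg⟩

lemma TrOf.sdiff_singleton (hS : TrOf E S) (he : PrivE E e S = ∅) : TrOf E (S \ {e}) := by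
  intro p hpE
  obtain ⟨g, hgS, hpg⟩ := hS p hpE
  by_cases hge : g = e
  · subst hge
    by_contra! hno
    exact he.subset ⟨hpE, eAdj_comm.1 hpg, hno⟩
  · exact ⟨g, ⟨hgS, hge⟩, hpg⟩

theorem exists_minTrOf_union_of_privE_nonempty {T Z : Set (Sym2 V)} (hZ : Z.Finite)
    (htr : TrOf E (T ∪ Z)) (hT : ∀ e ∈ T, (PrivE E e (T ∪ Z)).Nonempty) :
    ∃ Z' ⊆ Z, MinTrOf E (T ∪ Z') := by
  obtain ⟨Z', hZ'⟩ := (hZ.finite_subsets.subset fun _ h => h.1 :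
    {Z' | Z' ⊆ Z ∧ TrOf E (T ∪ Z')}.Finite).exists_minimal ⟨Z, subset_rfl, htr⟩
  obtain ⟨hZ'Z, htr'⟩ := hZ'.prop
  refine ⟨Z', hZ'Z, htr', fun e he => ?_⟩
  by_cases heT : e ∈ T
  · exact (hT e heT).mono (privE_anti (Set.union_subset_union_right T hZ'Z))
  have heZ' : e ∈ Z' := he.resolve_left heT
  by_contra hpriv
  have hsmaller : TrOf E (T ∪ (Z' \ {e})) := by
    rw [← Set.sdiff_singleton_eq_self heT, ← Set.union_sdiff_distrib]
    exact htr'.sdiff_singleton (Set.not_nonempty_iff_eq_empty.1 hpriv)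
  have := hZ'.eq_of_subset ⟨Set.sdiff_subset.trans hZ'Z, hsmaller⟩ Set.sdiff_subset
  exact (this.symm ▸ heZ' : e ∈ Z' \ {e}).2 rfl

end Transversal

namespace RVert

variable {n m : ℕ}

def lit : Fin n × Bool → RVert n m
  | (j, true) => pos j
  | (j, false) => neg j

@[simp] lemma lit_true (j : Fin n) : (lit (j, true) : RVert n m) = pos j := rfl

@[simp] lemma lit_false (j : Fin n) : (lit (j, false) : RVert n m) = neg j := rfl

lemma lit_injective : Function.Injective (lit : Fin n × Bool → RVert n m) := by
  rintro ⟨j, _ | _⟩ ⟨j', _ | _⟩ h <;> simp_all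

@[simp] lemma cls_ne_lit (h : Fin m) (l : Fin n × Bool) : cls h ≠ lit l := by
  obtain ⟨j, _ | _⟩ := l <;> simp

end RVert

def trueLitEdges {n m : ℕ} (C : Fin m → Finset (Fin n × Bool)) (f : Fin n → Bool) :
    Set (Sym2 (RVert n m)) :=
  {e | (∃ j h', (j, true) ∈ C h' ∧ f j = true ∧ e = s(pos j, cls h')) ∨
       (∃ j h', (j, false) ∈ C h' ∧ f j = false ∧ e = s(neg j, cls h'))}

section Reduction

variable {n m : ℕ} {C : Fin m → Finset (Fin n × Bool)} {f : Fin n → Bool}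

lemma mem_bdRed_iff {e : Sym2 (RVert n m)} :
    e ∈ BdRed C ↔ ∃ h, ∃ l ∈ C h, e = s(lit l, cls h) := by
  constructor
  · rintro (⟨j, h, hC, rfl⟩ | ⟨j, h, hC, rfl⟩)
    exacts [⟨h, (j, true), hC, rfl⟩, ⟨h, (j, false), hC, rfl⟩]
  · rintro ⟨h, ⟨j, _ | _⟩, hC, rfl⟩
    exacts [Or.inr ⟨j, h, hC, rfl⟩, Or.inl ⟨j, h, hC, rfl⟩]

lemma mem_trueLitEdges_iff {e : Sym2 (RVert n m)} :
    e ∈ trueLitEdges C f ↔ ∃ h, ∃ l ∈ C h, f l.1 = l.2 ∧ e = s(lit l, cls h) := by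
  constructor
  · rintro (⟨j, h, hC, hf, rfl⟩ | ⟨j, h, hC, hf, rfl⟩)
    exacts [⟨h, (j, true), hC, hf, rfl⟩, ⟨h, (j, false), hC, hf, rfl⟩]
  · rintro ⟨h, ⟨j, _ | _⟩, hC, hf, rfl⟩
    exacts [Or.inr ⟨j, h, hC, hf, rfl⟩, Or.inl ⟨j, h, hC, hf, rfl⟩]

lemma trueLitEdges_finite : (trueLitEdges C f).Finite := by
  refine (Set.finite_range fun p : Fin m × (Fin n × Bool) =>
    (s(lit p.2, cls p.1) : Sym2 (RVert n m))).subset fun e he => ?_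
  obtain ⟨h, l, -, -, rfl⟩ := mem_trueLitEdges_iff.1 he
  exact ⟨(h, l), rfl⟩

lemma exists_cls_mem_trueLitEdges (hf : ∀ h, ∃ l ∈ C h, f l.1 = l.2) (h : Fin m) :
    ∃ e ∈ trueLitEdges C f, cls h ∈ e := by
  obtain ⟨l, hl, hfl⟩ := hf h
  exact ⟨_, mem_trueLitEdges_iff.2 ⟨h, l, hl, hfl, rfl⟩, Sym2.mem_mk_right _ _⟩

lemma eq_of_lit_mem_trueLitEdges {e : Sym2 (RVert n m)} (he : e ∈ trueLitEdges C f)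
    {l : Fin n × Bool} (hl : lit l ∈ e) : f l.1 = l.2 := by
  obtain ⟨h, l', -, hfl', rfl⟩ := mem_trueLitEdges_iff.1 he
  rcases Sym2.mem_iff.1 hl with hl | hl
  · exact lit_injective hl ▸ hfl'
  · exact absurd hl.symm (cls_ne_lit _ _)

lemma not_both_stars_trueLitEdges (j : Fin n) :
    ¬ ((∃ e ∈ trueLitEdges C f, pos j ∈ e) ∧ (∃ e ∈ trueLitEdges C f, neg j ∈ e)) := by
  rintro ⟨⟨e₁, he₁, hpos⟩, ⟨e₂, he₂, hneg⟩⟩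
  have htrue : f j = true := eq_of_lit_mem_trueLitEdges (l := (j, true)) he₁ hpos
  have hfalse : f j = false := eq_of_lit_mem_trueLitEdges (l := (j, false)) he₂ hneg
  exact Bool.noConfusion (htrue.symm.trans hfalse)

lemma trOf_tred_union_trueLitEdges (hf : ∀ h, ∃ l ∈ C h, f l.1 = l.2) :
    TrOf (Ecur C) (Tred n m ∪ trueLitEdges C f) := by
  have hcls (h : Fin m) : ∃ g ∈ Tred n m ∪ trueLitEdges C f, cls h ∈ g :=
    let ⟨g, hg, hh⟩ := exists_cls_mem_trueLitEdges hf h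
    ⟨g, Or.inr hg, hh⟩
  have hpos (j : Fin n) : ∃ g ∈ Tred n m ∪ trueLitEdges C f, pos j ∈ g :=
    ⟨_, Or.inl (Or.inl ⟨j, rfl⟩), Sym2.mem_mk_left _ _⟩
  have hneg (j : Fin n) : ∃ g ∈ Tred n m ∪ trueLitEdges C f, neg j ∈ g :=
    ⟨_, Or.inl (Or.inl ⟨j, rfl⟩), Sym2.mem_mk_right _ _⟩
  have hx : ∃ g ∈ Tred n m ∪ trueLitEdges C f, x ∈ g :=
    ⟨_, Or.inl (Or.inr rfl), Sym2.mem_mk_left _ _⟩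
  refine trOf_of_forall_exists_mem ?_
  rintro e ((⟨j, h, -, rfl⟩ | ⟨j, h, -, rfl⟩ | ⟨j, rfl⟩ | ⟨j, rfl⟩ | ⟨j, rfl⟩) |
    (⟨h, rfl⟩ | rfl | rfl))
  exacts [⟨_, by simp, hcls h⟩, ⟨_, by simp, hcls h⟩, ⟨_, by simp, hpos j⟩,
    ⟨_, by simp, hneg j⟩, ⟨_, by simp, hpos j⟩, ⟨_, by simp, hcls h⟩, ⟨_, by simp, hx⟩,
    ⟨_, by simp, hx⟩]

lemma mem_tred_union_trueLitEdges_cases {g : Sym2 (RVert n m)} {v : RVert n m}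
    (hg : g ∈ Tred n m ∪ trueLitEdges C f) (hv : v ∈ g) :
    (∃ j, g = s(pos j, neg j) ∧ (v = pos j ∨ v = neg j)) ∨ (g = s(x, w) ∧ (v = x ∨ v = w)) ∨
      (∃ h, v = cls h) ∨ (∃ j, f j = true ∧ v = pos j) ∨ (∃ j, f j = false ∧ v = neg j) := by
  rcases hg with (⟨j, rfl⟩ | rfl) | (⟨j, h, -, hf, rfl⟩ | ⟨j, h, -, hf, rfl⟩) <;>
    rcases Sym2.mem_iff.1 hv with rfl | rfl
  all_goals simp_all

lemma privE_tred_union_trueLitEdges_nonempty {e : Sym2 (RVert n m)} (he : e ∈ Tred n m) :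
    (PrivE (Ecur C) e (Tred n m ∪ trueLitEdges C f)).Nonempty := by
  rcases he with ⟨j, rfl⟩ | rfl
  · cases hfj : f j
    · refine ⟨s(pos j, zv j), mem_privE_of_forall_mem_eq (by simp [Ecur, Eprev])
        ⟨pos j, by simp, by simp⟩ fun v hv g hg hvg => ?_⟩
      grind [mem_tred_union_trueLitEdges_cases hg hvg]
    · refine ⟨s(neg j, yv j), mem_privE_of_forall_mem_eq (by simp [Ecur, Eprev])
        ⟨neg j, by simp, by simp⟩ fun v hv g hg hvg => ?_⟩
      grind [mem_tred_union_trueLitEdges_cases hg hvg]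
  · refine ⟨s(x, y), mem_privE_of_forall_mem_eq (by simp [Ecur]) ⟨x, by simp, by simp⟩
      fun v hv g hg hvg => ?_⟩
    grind [mem_tred_union_trueLitEdges_cases hg hvg]

lemma ne_of_mem_bdRed {e : Sym2 (RVert n m)} (he : e ∈ BdRed C) (j : Fin n) :
    e ≠ s(pos j, neg j) := by
  obtain ⟨h, l, -, rfl⟩ := mem_bdRed_iff.1 he
  intro heq
  have : cls h ∈ s(pos j, neg j) := heq ▸ Sym2.mem_mk_right _ _
  simp at this

lemma not_both_stars_of_privE_nonempty {E T Z : Set (Sym2 (RVert n m))} (hZ : Z ⊆ BdRed C)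
    {j : Fin n} (hpriv : (PrivE E s(pos j, neg j) (T ∪ Z)).Nonempty) :
    ¬ ((∃ e ∈ Z, pos j ∈ e) ∧ (∃ e ∈ Z, neg j ∈ e)) := by
  rintro ⟨⟨e₁, he₁, hpos⟩, ⟨e₂, he₂, hneg⟩⟩
  refine hpriv.ne_empty (privE_eq_empty_of_forall_mem fun v hv => ?_)
  rcases Sym2.mem_iff.1 hv with rfl | rfl
  exacts [⟨e₁, Or.inr he₁, ne_of_mem_bdRed (hZ he₁) j, hpos⟩,
    ⟨e₂, Or.inr he₂, ne_of_mem_bdRed (hZ he₂) j, hneg⟩]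

theorem exists_satisfying_of_privE_nonempty {E T Z : Set (Sym2 (RVert n m))}
    (hZ : Z ⊆ BdRed C) (hcov : ∀ h, ∃ e ∈ Z, cls h ∈ e)
    (hpriv : ∀ j, (PrivE E s(pos j, neg j) (T ∪ Z)).Nonempty) :
    ∃ f : Fin n → Bool,
      (∀ j, (∃ e ∈ Z, pos j ∈ e) → f j = true) ∧
      (∀ j, (∃ e ∈ Z, neg j ∈ e) → f j = false) ∧
      (∀ h, ∃ l ∈ C h, f l.1 = l.2) := by
  classical
  let f : Fin n → Bool := fun j => decide (∃ e ∈ Z, pos j ∈ e)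
  have hpos : ∀ j, (∃ e ∈ Z, pos j ∈ e) → f j = true := fun j h => decide_eq_true h
  have hneg : ∀ j, (∃ e ∈ Z, neg j ∈ e) → f j = false := fun j h =>
    decide_eq_false fun h' => not_both_stars_of_privE_nonempty hZ (hpriv j) ⟨h', h⟩
  refine ⟨f, hpos, hneg, fun h => ?_⟩
  obtain ⟨e, heZ, hce⟩ := hcov h
  obtain ⟨h', ⟨j, b⟩, hl, rfl⟩ := mem_bdRed_iff.1 (hZ heZ)
  obtain rfl : h = h' := by simpa using hce
  refine ⟨(j, b), hl, ?_⟩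
  cases b
  exacts [hneg j ⟨_, heZ, by simp⟩, hpos j ⟨_, heZ, by simp⟩]

end Reduction

/-- correctness of the 3SAT reduction. Given a satisfying assignment `f`,
the set `Z` of all border edges at true literals covers every clause vertex, meets at
most one of the stars at `x_j` and `x̄_j` for each `j`, and some subset `Z' ⊆ Z` makes
`T ∪ Z'` a minimal transversal of `E_i`. Conversely, from any selection `Z` with
`T ∪ Z ∈ tr(E_i)` one obtains a well-defined satisfying assignment (`f(x_j) = 1` iff `Z`
meets the star of `x_j`). -/
theorem imt_reduction_correct (n m : ℕ) (C : Fin m → Finset (Fin n × Bool)) :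
    (∀ f : Fin n → Bool, (∀ h, ∃ l ∈ C h, f l.1 = l.2) →
      (∀ h : Fin m, ∃ e ∈ {e : Sym2 (RVert n m) |
          (∃ j h', (j, true) ∈ C h' ∧ f j = true ∧ e = s(pos j, cls h')) ∨
          (∃ j h', (j, false) ∈ C h' ∧ f j = false ∧ e = s(neg j, cls h'))},
        cls h ∈ e) ∧
      (∀ j : Fin n, ¬ ((∃ e ∈ {e : Sym2 (RVert n m) |
          (∃ j' h', (j', true) ∈ C h' ∧ f j' = true ∧ e = s(pos j', cls h')) ∨
          (∃ j' h', (j', false) ∈ C h' ∧ f j' = false ∧ e = s(neg j', cls h'))},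
          pos j ∈ e) ∧
        (∃ e ∈ {e : Sym2 (RVert n m) |
          (∃ j' h', (j', true) ∈ C h' ∧ f j' = true ∧ e = s(pos j', cls h')) ∨
          (∃ j' h', (j', false) ∈ C h' ∧ f j' = false ∧ e = s(neg j', cls h'))},
          neg j ∈ e))) ∧
      (∃ Z' ⊆ {e : Sym2 (RVert n m) |
          (∃ j h', (j, true) ∈ C h' ∧ f j = true ∧ e = s(pos j, cls h')) ∨
          (∃ j h', (j, false) ∈ C h' ∧ f j = false ∧ e = s(neg j, cls h'))},
        MinTrOf (Ecur C) (Tred n m ∪ Z'))) ∧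
    (∀ Z : Set (Sym2 (RVert n m)), SelRed C Z → MinTrOf (Ecur C) (Tred n m ∪ Z) →
      ∃ f : Fin n → Bool,
        (∀ j, (∃ e ∈ Z, pos j ∈ e) → f j = true) ∧
        (∀ j, (∃ e ∈ Z, neg j ∈ e) → f j = false) ∧
        (∀ h, ∃ l ∈ C h, f l.1 = l.2)) := by
  refine ⟨fun f hf => ⟨exists_cls_mem_trueLitEdges hf, not_both_stars_trueLitEdges, ?_⟩,
    fun Z hsel hmin => ?_⟩
  · exact exists_minTrOf_union_of_privE_nonempty trueLitEdges_finite
      (trOf_tred_union_trueLitEdges hf) fun e he => privE_tred_union_trueLitEdges_nonempty he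
  · exact exists_satisfying_of_privE_nonempty hsel.1 (fun h => (hsel.2 h).exists)
      fun j => hmin.2 _ (Or.inl (Or.inl ⟨j, rfl⟩))
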